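/- arXiv:1912.09347 — 6 statements merged into one kernel-verified Lean document; each statement's English description precedes it below -/
import Mathlib

section
/- Let 0 < s < 1 be real and t ∈ ℝ. Then the function ξ ↦ e^{2π s ξ}/(1 + e^{2πξ}) is integrable on ℝ and 2 ∫_ℝ (e^{2π s ξ}/(1 + e^{2πξ})) e^{-2π i t ξ} dξ = 1 / sin(π(s - i t)). -/
/-!
Substituting `x = σ(2πξ)`, with `σ` the logistic sigmoid, turns the integral into the Beta integral
`B(u, 1 - u)` for `u = s - it`, and `B(u, 1 - u) = Γ(u) Γ(1 - u) = π / sin (π u)` by the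
reflection formula.
-/

open MeasureTheory Set Complex
open scoped Real

section Beta

variable {u : ℂ} (hu0 : 0 < u.re) (hu1 : u.re < 1)
include hu0 hu1

lemma integrableOn_cpow_mul_one_sub_cpow_neg :
    IntegrableOn (fun x : ℝ => (x : ℂ) ^ (u - 1) * (1 - (x : ℂ)) ^ (-u)) (Ioo 0 1) := by
  have h := betaIntegral_convergent hu0 (v := 1 - u) (by simpa using hu1)
  rw [sub_sub_cancel_left] at h
  exact (intervalIntegrable_iff_integrableOn_Ioo_of_le zero_le_one).mp h

lemma integral_cpow_mul_one_sub_cpow_neg :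
    ∫ x in Ioo (0 : ℝ) 1, (x : ℂ) ^ (u - 1) * (1 - (x : ℂ)) ^ (-u) = π / sin (π * u) := by
  have h := Gamma_mul_Gamma_eq_betaIntegral hu0 (t := 1 - u) (by simpa using hu1)
  rw [add_sub_cancel, Gamma_one, one_mul, Gamma_mul_Gamma_one_sub, betaIntegral,
    sub_sub_cancel_left, intervalIntegral.integral_of_le zero_le_one,
    integral_Ioc_eq_integral_Ioo] at h
  exact h.symm

end Beta

section SigmoidSubstitution

variable {E : Type*} [NormedAddCommGroup E] [NormedSpace ℝ E]

lemma image_univ_sigmoid : Real.sigmoid '' univ = Ioo 0 1 := by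
  rw [image_univ, Real.range_sigmoid]

lemma integrableOn_Ioo_iff_integrable_sigmoid (g : ℝ → E) :
    IntegrableOn g (Ioo 0 1) ↔
      Integrable (fun ξ => |Real.sigmoid ξ * (1 - Real.sigmoid ξ)| • g (Real.sigmoid ξ)) := by
  rw [← image_univ_sigmoid, integrableOn_image_iff_integrableOn_abs_deriv_smul MeasurableSet.univ
    (fun ξ _ => (Real.hasDerivAt_sigmoid ξ).hasDerivWithinAt) Real.sigmoid_injective.injOn,
    integrableOn_univ]

lemma integral_Ioo_eq_integral_sigmoid (g : ℝ → E) :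
    ∫ x in Ioo 0 1, g x =
      ∫ ξ, |Real.sigmoid ξ * (1 - Real.sigmoid ξ)| • g (Real.sigmoid ξ) := by
  rw [← image_univ_sigmoid, integral_image_eq_integral_abs_deriv_smul MeasurableSet.univ
    (fun ξ _ => (Real.hasDerivAt_sigmoid ξ).hasDerivWithinAt) Real.sigmoid_injective.injOn,
    setIntegral_univ]

end SigmoidSubstitution

lemma ofReal_exp_cpow (r : ℝ) (w : ℂ) : (Real.exp r : ℂ) ^ w = cexp (r * w) := by
  rw [cpow_def_of_ne_zero (ofReal_ne_zero.mpr (Real.exp_pos r).ne'),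
    ← ofReal_log (Real.exp_pos r).le, Real.log_exp]

lemma abs_deriv_sigmoid_smul_cpow_mul_one_sub_cpow (u : ℂ) (ξ : ℝ) :
    |Real.sigmoid ξ * (1 - Real.sigmoid ξ)| •
        ((Real.sigmoid ξ : ℂ) ^ (u - 1) * (1 - (Real.sigmoid ξ : ℂ)) ^ (-u)) =
      cexp (u * ξ) / (1 + cexp ξ) := by
  set L := Real.log (1 + Real.exp ξ)
  have hL : Real.exp L = 1 + Real.exp ξ := Real.exp_log (by positivity)
  have hone_sub : 1 - Real.sigmoid ξ = Real.exp (-L) := by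
    rw [← Real.sigmoid_neg, Real.sigmoid_def, neg_neg, Real.exp_neg, hL]
  have hsigmoid : Real.sigmoid ξ = Real.exp (ξ - L) := by
    rw [eq_div_of_mul_eq (Real.exp_pos _).ne' (Real.sigmoid_mul_rexp_neg ξ), Real.sigmoid_neg,
      hone_sub, ← Real.exp_sub, sub_neg_eq_add, neg_add_eq_sub]
  have hone_add : (1 : ℂ) + cexp ξ = cexp L := by rw [← ofReal_exp L, hL]; push_cast; rfl
  have hone_sub' : 1 - (Real.sigmoid ξ : ℂ) = (Real.exp (-L) : ℂ) := by
    rw [← hone_sub]; push_cast; rfl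
  rw [hone_sub', hone_sub, hsigmoid, ofReal_exp_cpow, ofReal_exp_cpow,
    abs_of_pos (by positivity), real_smul, hone_add, div_eq_mul_inv, ← Complex.exp_neg]
  push_cast
  simp only [← Complex.exp_add]
  congr 1
  ring

section

variable {u : ℂ} (hu0 : 0 < u.re) (hu1 : u.re < 1)
include hu0 hu1

lemma integrable_cexp_mul_div_one_add_cexp :
    Integrable (fun ξ : ℝ => cexp (u * ξ) / (1 + cexp ξ)) := by
  simpa only [abs_deriv_sigmoid_smul_cpow_mul_one_sub_cpow] using
    (integrableOn_Ioo_iff_integrable_sigmoid _).mp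
      (integrableOn_cpow_mul_one_sub_cpow_neg hu0 hu1)

lemma integral_cexp_mul_div_one_add_cexp :
    ∫ ξ : ℝ, cexp (u * ξ) / (1 + cexp ξ) = π / sin (π * u) := by
  simpa only [integral_Ioo_eq_integral_sigmoid, abs_deriv_sigmoid_smul_cpow_mul_one_sub_cpow] using
    integral_cpow_mul_one_sub_cpow_neg hu0 hu1

end

lemma ofReal_exp_div_one_add_exp_mul_cexp (s t ξ : ℝ) :
    ((Real.exp (2 * π * s * ξ) / (1 + Real.exp (2 * π * ξ)) : ℝ) : ℂ) *
        cexp (-(2 * π * I * t * ξ)) =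
      cexp ((s - I * t) * ↑(2 * π * ξ)) / (1 + cexp ↑(2 * π * ξ)) := by
  push_cast
  rw [div_mul_eq_mul_div, ← Complex.exp_add]
  ring_nf

/-- For `0 < s < 1` and `t ∈ ℝ`, the function `ξ ↦ e^{2πsξ}/(1+e^{2πξ})` is integrable on `ℝ`
and `2 ∫_ℝ e^{2πsξ}/(1+e^{2πξ}) · e^{-2πitξ} dξ = 1 / sin (π (s - it))`. -/
theorem fourier_transform_exp_div_one_add_exp (s t : ℝ) (hs0 : 0 < s) (hs1 : s < 1) :
    Integrable (fun ξ : ℝ =>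
        Real.exp (2 * Real.pi * s * ξ) / (1 + Real.exp (2 * Real.pi * ξ))) ∧
      2 * ∫ ξ : ℝ,
          ((Real.exp (2 * Real.pi * s * ξ) / (1 + Real.exp (2 * Real.pi * ξ)) : ℝ) : ℂ) *
            Complex.exp (-(2 * (Real.pi : ℂ) * Complex.I * (t : ℂ) * (ξ : ℂ))) =
        1 / Complex.sin ((Real.pi : ℂ) * ((s : ℂ) - Complex.I * (t : ℂ))) := by
  have hre : ∀ t : ℝ, 0 < (s - I * t : ℂ).re ∧ (s - I * t : ℂ).re < 1 := fun t => by
    simpa using ⟨hs0, hs1⟩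
  have h2π : 2 * π ≠ 0 := by positivity
  have hintegrable (t : ℝ) :=
    (integrable_cexp_mul_div_one_add_cexp (hre t).1 (hre t).2).comp_mul_left' h2π
  simp only [← ofReal_exp_div_one_add_exp_mul_cexp] at hintegrable
  -- the real integrand is the real part of the complex one at frequency `t = 0`
  refine ⟨by simpa only [ofReal_zero, mul_zero, zero_mul, neg_zero, Complex.exp_zero, mul_one,
    RCLike.re_to_complex, ofReal_re] using (hintegrable 0).re, ?_⟩
  simp only [ofReal_exp_div_one_add_exp_mul_cexp]
  rw [Measure.integral_comp_mul_left (fun y : ℝ => cexp ((s - I * t) * y) / (1 + cexp y)),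
    integral_cexp_mul_div_one_add_cexp (hre t).1 (hre t).2, abs_of_pos (by positivity), real_smul]
  push_cast
  field_simp
end

section
/- Let 0 < s < 1 and x > 0. Then the function t ↦ x^{it} / sin(π(s - i t)) is integrable on ℝ and ∫_ℝ x^{it} / sin(π(s - i t)) dt = 2 x^s / (1 + x). -/
/-!
The substitution `v = t / (1 + t)` turns the Mellin transform of `(1 + t)⁻¹` at `z`,
`0 < re z < 1`, into the beta integral `B(z, 1 - z) = Γ(z) Γ(1 - z) = π / sin (π z)`.
On the line `re z = s` this transform decays like `exp (-π |im z|)`, so Mellin inversion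
applies and gives `(1 + x)⁻¹ = (x ^ (-s) / 2) ∫ x ^ (i t) / sin (π (s - i t)) dt`
after the reflection `t ↦ -t`.
-/

open MeasureTheory Set Complex
open scoped Real

namespace Complex

theorem abs_sin_re_mul_cosh_im_le_norm_sin (z : ℂ) :
    |Real.sin z.re| * Real.cosh z.im ≤ ‖sin z‖ := by
  have h : (sin z).re = Real.sin z.re * Real.cosh z.im := by
    rw [sin_eq z]; simp [← ofReal_sin, ← ofReal_cos, ← ofReal_cosh, ← ofReal_sinh]
  simpa [h, abs_mul, abs_of_pos (Real.cosh_pos _)] using abs_re_le_norm (sin z)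

theorem norm_inv_sin_le (z : ℂ) (hz : Real.sin z.re ≠ 0) :
    ‖(sin z)⁻¹‖ ≤ 2 / |Real.sin z.re| * Real.exp (-|z.im|) := by
  have hcosh : Real.exp |z.im| / 2 ≤ Real.cosh z.im := by
    rw [Real.cosh_eq]; linarith [Real.exp_abs_le z.im]
  have hlow : |Real.sin z.re| * (Real.exp |z.im| / 2) ≤ ‖sin z‖ :=
    (mul_le_mul_of_nonneg_left hcosh (abs_nonneg _)).trans
      (abs_sin_re_mul_cosh_im_le_norm_sin z)
  calc ‖(sin z)⁻¹‖ = ‖sin z‖⁻¹ := norm_inv _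
    _ ≤ (|Real.sin z.re| * (Real.exp |z.im| / 2))⁻¹ :=
      inv_anti₀ (by positivity) hlow
    _ = 2 / |Real.sin z.re| * Real.exp (-|z.im|) := by
      rw [Real.exp_neg]; field_simp

theorem sin_ne_zero_of_real_sin_re_ne_zero {z : ℂ} (hz : Real.sin z.re ≠ 0) : sin z ≠ 0 := by
  intro h
  have := abs_sin_re_mul_cosh_im_le_norm_sin z
  rw [h, norm_zero] at this
  exact (mul_pos (abs_pos.2 hz) (Real.cosh_pos _)).not_ge this

end Complex

theorem integrable_exp_neg_abs : Integrable fun t : ℝ => Real.exp (-|t|) := by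
  have hIoi : IntegrableOn (fun t : ℝ => Real.exp (-|t|)) (Ioi 0) :=
    (integrableOn_exp_neg_Ioi 0).congr_fun (fun t ht => by simp [abs_of_pos (mem_Ioi.1 ht)])
      measurableSet_Ioi
  have hIio : IntegrableOn (fun t : ℝ => Real.exp (-|t|)) (Iio 0) := by
    rw [← (Measure.measurePreserving_neg (volume : Measure ℝ)).integrableOn_comp_preimage
      (Homeomorph.neg ℝ).measurableEmbedding]
    simpa [Function.comp_def] using hIoi
  rw [← integrableOn_univ, ← Iic_union_Ioi (a := (0 : ℝ)), integrableOn_union]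
  exact ⟨(integrableOn_Iic_iff_integrableOn_Iio).2 hIio, hIoi⟩

theorem integrable_inv_sin_add_mul_I {σ : ℝ} (hσ : Real.sin σ ≠ 0) :
    Integrable fun t : ℝ => (sin (σ + t * I))⁻¹ := by
  have hre : ∀ t : ℝ, ((σ : ℂ) + t * I).re = σ := by simp
  have him : ∀ t : ℝ, ((σ : ℂ) + t * I).im = t := by simp
  refine (integrable_exp_neg_abs.const_mul (2 / |Real.sin σ|)).mono' ?_ (.of_forall fun t => ?_)
  · refine (Continuous.inv₀ (by fun_prop) fun t => ?_).aestronglyMeasurable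
    exact sin_ne_zero_of_real_sin_re_ne_zero (by rwa [hre])
  · simpa [hre, him] using norm_inv_sin_le (σ + t * I) (by rwa [hre])

theorem image_div_one_add_Ioi : (fun u : ℝ => u / (1 + u)) '' Ioi 0 = Ioo 0 1 := by
  ext v
  constructor
  · rintro ⟨u, hu : 0 < u, rfl⟩
    exact ⟨by positivity, (div_lt_one (by positivity)).2 (by linarith)⟩
  · rintro ⟨hv0, hv1⟩
    refine ⟨v / (1 - v), div_pos hv0 (by linarith), ?_⟩
    have : 1 - v ≠ 0 := by linarith
    field_simp
    ring

theorem injOn_div_one_add_Ioi : InjOn (fun u : ℝ => u / (1 + u)) (Ioi 0) := by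
  intro a (ha : 0 < a) b (hb : 0 < b) h
  field_simp at h
  linarith

theorem hasDerivAt_div_one_add {u : ℝ} (hu : 1 + u ≠ 0) :
    HasDerivAt (fun u : ℝ => u / (1 + u)) ((1 + u) ^ 2)⁻¹ u := by
  refine ((hasDerivAt_id u).div ((hasDerivAt_id u).const_add 1) hu).congr_deriv ?_
  simp

theorem inv_one_add_sq_smul_cpow_div_one_add (z : ℂ) {u : ℝ} (hu : 0 < u) :
    |((1 + u) ^ 2)⁻¹| •
        (((u / (1 + u) : ℝ) : ℂ) ^ (z - 1) * (1 - ((u / (1 + u) : ℝ) : ℂ)) ^ (-z)) =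
      (u : ℂ) ^ (z - 1) * (1 + (u : ℂ))⁻¹ := by
  set w : ℝ := (1 + u)⁻¹ with hw
  have hw0 : 0 < w := by positivity
  have hwne : (w : ℂ) ≠ 0 := ofReal_ne_zero.2 hw0.ne'
  have hdiv : u / (1 + u) = u * w := div_eq_mul_inv _ _
  have hsub : (1 : ℂ) - ((u * w : ℝ) : ℂ) = w := by
    have : (1 : ℝ) - u * w = w := by rw [hw]; field_simp; ring
    exact_mod_cast this
  have hpow : (w : ℂ) ^ (z - 1) * (w : ℂ) ^ (-z) = (w : ℂ)⁻¹ := by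
    rw [← cpow_add _ _ hwne, show z - 1 + -z = -1 by ring, cpow_neg_one]
  rw [hdiv, hsub, ofReal_mul, mul_cpow_ofReal_nonneg hu.le hw0.le, mul_assoc, hpow,
    show ((1 + u) ^ 2)⁻¹ = w ^ 2 by rw [hw, inv_pow], abs_of_pos (by positivity),
    show (1 + (u : ℂ))⁻¹ = w by push_cast [hw]; rfl, real_smul]
  push_cast
  field_simp

theorem hasMellin_inv_one_add {z : ℂ} (hz0 : 0 < z.re) (hz1 : z.re < 1) :
    HasMellin (fun t : ℝ => (1 + (t : ℂ))⁻¹) z (π / sin (π * z)) := by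
  have h1z : 0 < (1 - z).re := by simpa using hz1
  have hderiv : ∀ u ∈ Ioi (0 : ℝ),
      HasDerivWithinAt (fun u : ℝ => u / (1 + u)) ((1 + u) ^ 2)⁻¹ (Ioi 0) u :=
    fun u (hu : 0 < u) => (hasDerivAt_div_one_add (by positivity)).hasDerivWithinAt
  have hcongr : EqOn (fun u : ℝ => |((1 + u) ^ 2)⁻¹| • (((u / (1 + u) : ℝ) : ℂ) ^ (z - 1) *
      (1 - ((u / (1 + u) : ℝ) : ℂ)) ^ (-z))) (fun t : ℝ => (t : ℂ) ^ (z - 1) • (1 + (t : ℂ))⁻¹)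
      (Ioi 0) :=
    fun u hu => inv_one_add_sq_smul_cpow_div_one_add z hu
  have hbeta :
      IntegrableOn (fun v : ℝ => (v : ℂ) ^ (z - 1) * (1 - (v : ℂ)) ^ (-z)) (Ioo 0 1) := by
    have := betaIntegral_convergent hz0 h1z
    rwa [intervalIntegrable_iff_integrableOn_Ioo_of_le zero_le_one, sub_sub_cancel_left] at this
  rw [← image_div_one_add_Ioi] at hbeta
  refine ⟨?_, ?_⟩
  · exact ((integrableOn_image_iff_integrableOn_abs_deriv_smul measurableSet_Ioi hderiv
      injOn_div_one_add_Ioi _).1 hbeta).congr_fun hcongr measurableSet_Ioi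
  · rw [mellin, ← setIntegral_congr_fun measurableSet_Ioi hcongr,
      ← integral_image_eq_integral_abs_deriv_smul measurableSet_Ioi hderiv injOn_div_one_add_Ioi
        fun v : ℝ => (v : ℂ) ^ (z - 1) * (1 - (v : ℂ)) ^ (-z),
      image_div_one_add_Ioi, ← integral_Ioc_eq_integral_Ioo,
      ← intervalIntegral.integral_of_le zero_le_one, ← sub_sub_cancel_left 1 z,
      ← betaIntegral, ← Gamma_mul_Gamma_one_sub, Gamma_mul_Gamma_eq_betaIntegral hz0 h1z]
    simp

theorem verticalIntegrable_pi_div_sin {s : ℝ} (hs : Real.sin (π * s) ≠ 0) :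
    VerticalIntegrable (fun z => π / sin (π * z)) s := by
  refine (((integrable_inv_sin_add_mul_I hs).comp_mul_left' Real.pi_ne_zero).const_mul
    (π : ℂ)).congr (.of_forall fun y => ?_)
  simp only [div_eq_mul_inv]
  push_cast
  ring_nf

theorem integrable_cpow_I_mul_div_sin {s x : ℝ} (hs : Real.sin (π * s) ≠ 0) (hx : 0 < x) :
    Integrable fun t : ℝ => (x : ℂ) ^ (I * t) / sin (π * (s - I * t)) := by
  refine (((integrable_inv_sin_add_mul_I hs).comp_mul_left'
    (neg_ne_zero.2 Real.pi_ne_zero)).bdd_mul (f := fun t : ℝ => (x : ℂ) ^ (I * t)) (c := 1)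
    ?_ (.of_forall fun t => ?_)).congr (.of_forall fun t => ?_)
  · exact (Continuous.const_cpow (by fun_prop)
      (Or.inl (ofReal_ne_zero.2 hx.ne'))).aestronglyMeasurable
  · simp [norm_cpow_eq_rpow_re_of_pos hx]
  · simp only [div_eq_mul_inv]
    push_cast
    ring_nf

theorem mellinInv_pi_div_sin (s : ℝ) {x : ℝ} (hx : 0 < x) :
    mellinInv s (fun z => π / sin (π * z)) x =
      (x : ℂ) ^ (-(s : ℂ)) / 2 * ∫ t : ℝ, (x : ℂ) ^ (I * t) / sin (π * (s - I * t)) := by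
  have hx0 : (x : ℂ) ≠ 0 := ofReal_ne_zero.2 hx.ne'
  have hflip : ∀ t : ℝ,
      (x : ℂ) ^ (-(s + ((-t : ℝ) : ℂ) * I)) • (π / sin (π * (s + ((-t : ℝ) : ℂ) * I))) =
        (x : ℂ) ^ (-(s : ℂ)) * π * ((x : ℂ) ^ (I * t) / sin (π * (s - I * t))) := by
    intro t
    rw [smul_eq_mul, show -((s : ℂ) + ((-t : ℝ) : ℂ) * I) = -s + I * t by push_cast; ring,
      cpow_add _ _ hx0]
    push_cast
    ring_nf
  rw [mellinInv, ← integral_neg_eq_self]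
  simp only [hflip, integral_const_mul, real_smul]
  push_cast
  field_simp

/-- For `0 < s < 1` and `x > 0`, the function `t ↦ x^{it} / sin (π (s - it))` is integrable
on `ℝ` and its integral equals `2 x^s / (1 + x)`. -/
theorem integral_cpow_div_sin (s x : ℝ) (hs0 : 0 < s) (hs1 : s < 1) (hx : 0 < x) :
    Integrable (fun t : ℝ =>
        (x : ℂ) ^ (Complex.I * (t : ℂ)) /
          Complex.sin ((Real.pi : ℂ) * ((s : ℂ) - Complex.I * (t : ℂ)))) ∧
      ∫ t : ℝ, (x : ℂ) ^ (Complex.I * (t : ℂ)) /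
          Complex.sin ((Real.pi : ℂ) * ((s : ℂ) - Complex.I * (t : ℂ))) =
        2 * (x : ℂ) ^ (s : ℂ) / (1 + (x : ℂ)) := by
  have hsin : Real.sin (π * s) ≠ 0 :=
    (Real.sin_pos_of_pos_of_lt_pi (by positivity) (by nlinarith [Real.pi_pos])).ne'
  have hmellin (y : ℝ) : HasMellin (fun t : ℝ => (1 + (t : ℂ))⁻¹) (s + y * I)
      (π / sin (π * (s + y * I))) :=
    hasMellin_inv_one_add (by simpa) (by simpa)
  have hvert : VerticalIntegrable (mellin fun t : ℝ => (1 + (t : ℂ))⁻¹) s :=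
    (verticalIntegrable_pi_div_sin hsin).congr (.of_forall fun y => (hmellin y).2.symm)
  have hone_add : (1 + (x : ℂ)) ≠ 0 := by exact_mod_cast (by positivity : 1 + x ≠ 0)
  have hinv := mellinInv_mellin_eq s _ hx (by simpa using (hmellin 0).1) hvert
    (continuousAt_const.add continuous_ofReal.continuousAt |>.inv₀ hone_add)
  have hline : mellinInv s (mellin fun t : ℝ => (1 + (t : ℂ))⁻¹) x =
      mellinInv s (fun z => π / sin (π * z)) x := by
    simp only [mellinInv, (hmellin _).2]
  rw [hline, mellinInv_pi_div_sin s hx, cpow_neg] at hinv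
  refine ⟨integrable_cpow_I_mul_div_sin hsin hx, ?_⟩
  have hxs : (x : ℂ) ^ (s : ℂ) ≠ 0 := by simp [hx.ne']
  field_simp at hinv ⊢
  linear_combination hinv
end

section
/- Let σ > 0 and r > 0, and let f be holomorphic on the open strip S_σ = { z ∈ ℂ : |Im z| < σ } with M := sup_{|y| < σ} ∫_ℝ |f(x + i y)| dx < ∞. Let (w_k)_{k ∈ ℕ} be points of S_σ such that the closed disks of radius r centered at the w_k are pairwise disjoint and contained in S_σ. Then ∑_{k} |f(w_k)| ≤ 2σM/(π r²). -/
open MeasureTheory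

open Set Metric Real Complex
open scoped ENNReal

/-! Integrating the circle mean value property `2π |f(w)| ≤ ∫_{-π}^{π} |f(w + ρ e^{iθ})| dθ`
against `ρ dρ` over `0 < ρ ≤ r` gives, in polar coordinates, the area mean value inequality
`π r² |f(w)| ≤ ∫_{D(w,r)} |f|`. Summing it over the disjoint disks `D(w_k, r)`, which lie in the
strip, bounds `π r² ∑ |f(w_k)|` by the integral of `|f|` over the strip, which by Tonelli is at most
`2σM` since every horizontal line contributes at most `M`. All of this takes place in `ℝ≥0∞`, where
the sum always exists; finiteness of the bound then yields summability. -/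

theorem ContinuousOn.measurable_indicator {α γ : Type*} [MeasurableSpace α] [TopologicalSpace α]
    [OpensMeasurableSpace α] [TopologicalSpace γ] [MeasurableSpace γ] [BorelSpace γ] [Zero γ]
    {g : α → γ} {s : Set α} (hg : ContinuousOn g s) (hs : MeasurableSet s) :
    Measurable (s.indicator g) := by
  classical
  rw [← piecewise_eq_indicator]
  exact hg.measurable_piecewise continuousOn_const hs

theorem circleMap_eq_add_polarCoord_symm (c : ℂ) (ρ θ : ℝ) :
    circleMap c ρ θ = c + Complex.polarCoord.symm (ρ, θ) := by
  simp only [circleMap, Complex.polarCoord_symm_apply, Complex.exp_mul_I]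
  push_cast
  ring

theorem setLIntegral_Ioc_zero_ofReal {r : ℝ} (hr : 0 ≤ r) :
    ∫⁻ ρ in Ioc 0 r, ENNReal.ofReal ρ = ENNReal.ofReal (r ^ 2 / 2) := by
  have hint : ∫ ρ in Ioc 0 r, ρ = r ^ 2 / 2 := by
    rw [← intervalIntegral.integral_of_le hr, integral_id]
    ring
  rw [← hint, ofReal_integral_eq_lintegral_ofReal continuous_id'.integrableOn_Ioc]
  exact (ae_restrict_mem measurableSet_Ioc).mono fun ρ hρ ↦ hρ.1.le

theorem ofReal_mul_le_setLIntegral_closedBall {g : ℂ → ℝ≥0∞} (hg : Measurable g) {c : ℂ} {r : ℝ}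
    (hr : 0 ≤ r) {a : ℝ≥0∞}
    (hcircle : ∀ ρ ∈ Ioc 0 r,
      ENNReal.ofReal (2 * π) * a ≤ ∫⁻ θ in Ioo (-π) π, g (circleMap c ρ θ)) :
    ENNReal.ofReal (π * r ^ 2) * a ≤ ∫⁻ z in closedBall c r, g z := by
  have hmaps : ∀ p ∈ Ioc 0 r ×ˢ Ioo (-π) π, circleMap c p.1 p.2 ∈ closedBall c r := fun p hp ↦
    closedBall_subset_closedBall hp.1.2 (circleMap_mem_closedBall c hp.1.1.le p.2)
  calc ENNReal.ofReal (π * r ^ 2) * a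
      = ∫⁻ ρ in Ioc 0 r, ENNReal.ofReal ρ * (ENNReal.ofReal (2 * π) * a) := by
        rw [lintegral_mul_const _ ENNReal.measurable_ofReal, setLIntegral_Ioc_zero_ofReal hr,
          ← mul_assoc, ← ENNReal.ofReal_mul (by positivity)]
        ring_nf
    _ ≤ ∫⁻ ρ in Ioc 0 r, ENNReal.ofReal ρ * ∫⁻ θ in Ioo (-π) π, g (circleMap c ρ θ) :=
        setLIntegral_mono' measurableSet_Ioc fun ρ hρ ↦ by gcongr; exact hcircle ρ hρ
    _ = ∫⁻ p in Ioc 0 r ×ˢ Ioo (-π) π, ENNReal.ofReal p.1 * g (circleMap c p.1 p.2) := by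
        rw [Measure.volume_eq_prod, ← Measure.prod_restrict, lintegral_prod]
        · simp_rw [lintegral_const_mul' _ _ ENNReal.ofReal_ne_top]
        · exact (measurable_fst.ennreal_ofReal.mul (hg.comp (by fun_prop))).aemeasurable
    _ = ∫⁻ p in Ioc 0 r ×ˢ Ioo (-π) π,
          ENNReal.ofReal p.1 * (closedBall c r).indicator g (c + Complex.polarCoord.symm p) :=
        setLIntegral_congr_fun (measurableSet_Ioc.prod measurableSet_Ioo) fun p hp ↦ by
          rw [← circleMap_eq_add_polarCoord_symm, indicator_of_mem (hmaps p hp)]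
    _ ≤ ∫⁻ p in polarCoord.target,
          ENNReal.ofReal p.1 * (closedBall c r).indicator g (c + Complex.polarCoord.symm p) :=
        lintegral_mono_set (prod_mono Ioc_subset_Ioi_self subset_rfl)
    _ = ∫⁻ z, (closedBall c r).indicator g (c + z) :=
        Complex.lintegral_comp_polarCoord_symm fun z ↦ (closedBall c r).indicator g (c + z)
    _ = ∫⁻ z in closedBall c r, g z := by
        rw [lintegral_add_left_eq_self, lintegral_indicator measurableSet_closedBall]

theorem Complex.lintegral_eq_lintegral_lintegral {g : ℂ → ℝ≥0∞} (hg : Measurable g) :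
    ∫⁻ z, g z = ∫⁻ y : ℝ, ∫⁻ x : ℝ, g (x + y * I) := by
  rw [← (volume_preserving_equiv_real_prod.symm).lintegral_comp_emb
    measurableEquivRealProd.symm.measurableEmbedding, Measure.volume_eq_prod,
    lintegral_prod_symm' (fun p ↦ g (measurableEquivRealProd.symm p))
      (hg.comp measurableEquivRealProd.symm.measurable)]
  simp [Complex.mk_eq_add_mul_I]

theorem setLIntegral_strip_le {σ : ℝ} {g : ℂ → ℝ≥0∞} (hg : ContinuousOn g {z | |z.im| < σ})
    {C : ℝ≥0∞} (hline : ∀ y : ℝ, |y| < σ → ∫⁻ x : ℝ, g (x + y * I) ≤ C) :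
    ∫⁻ z in {z : ℂ | |z.im| < σ}, g z ≤ ENNReal.ofReal (2 * σ) * C := by
  have hS : MeasurableSet {z : ℂ | |z.im| < σ} :=
    measurableSet_lt (by fun_prop) measurable_const
  rw [← lintegral_indicator hS,
    Complex.lintegral_eq_lintegral_lintegral (hg.measurable_indicator hS)]
  calc ∫⁻ y : ℝ, ∫⁻ x : ℝ, {z : ℂ | |z.im| < σ}.indicator g (x + y * I)
      ≤ ∫⁻ y : ℝ, (Ioo (-σ) σ).indicator (fun _ ↦ C) y := by
        refine lintegral_mono fun y ↦ ?_
        by_cases hy : |y| < σ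
        · simpa [indicator_of_mem, hy, abs_lt.mp hy] using hline y hy
        · have hy' : y ∉ Ioo (-σ) σ := fun h ↦ hy (abs_lt.mpr h)
          simp [indicator_of_notMem, hy', hy]
    _ = ENNReal.ofReal (2 * σ) * C := by
        rw [lintegral_indicator measurableSet_Ioo, setLIntegral_const, Real.volume_Ioo, mul_comm]
        ring_nf

section Holomorphic

variable {E : Type*} [NormedAddCommGroup E] [NormedSpace ℂ E] [CompleteSpace E]

theorem DiffContOnCl.two_pi_smul_eq_integral_circleMap {f : ℂ → E} {c : ℂ} {R : ℝ}
    (hf : DiffContOnCl ℂ f (ball c |R|)) :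
    (2 * π) • f c = ∫ θ in -π..π, f (circleMap c R θ) := by
  rw [← hf.circleAverage, circleAverage_eq_integral_add (-π), smul_inv_smul₀ two_pi_pos.ne',
    intervalIntegral.integral_comp_add_right (fun θ ↦ f (circleMap c R θ))]
  ring_nf

theorem DiffContOnCl.ofReal_two_pi_mul_enorm_le_lintegral {f : ℂ → E} {c : ℂ} {R : ℝ}
    (hf : DiffContOnCl ℂ f (ball c |R|)) :
    ENNReal.ofReal (2 * π) * ‖f c‖ₑ ≤ ∫⁻ θ in Ioo (-π) π, ‖f (circleMap c R θ)‖ₑ := by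
  calc ENNReal.ofReal (2 * π) * ‖f c‖ₑ = ‖(2 * π) • f c‖ₑ := by
        rw [enorm_smul, Real.enorm_of_nonneg two_pi_pos.le]
    _ = ‖∫ θ in Ioc (-π) π, f (circleMap c R θ)‖ₑ := by
        rw [hf.two_pi_smul_eq_integral_circleMap,
          intervalIntegral.integral_of_le (by linarith [pi_pos])]
    _ ≤ ∫⁻ θ in Ioc (-π) π, ‖f (circleMap c R θ)‖ₑ := enorm_integral_le_lintegral_enorm _
    _ = ∫⁻ θ in Ioo (-π) π, ‖f (circleMap c R θ)‖ₑ := setLIntegral_congr Ioo_ae_eq_Ioc.symm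

theorem DiffContOnCl.ofReal_mul_enorm_le_setLIntegral {f : ℂ → E} {c : ℂ} {r : ℝ}
    (hf : DiffContOnCl ℂ f (ball c r)) (hr : 0 ≤ r) :
    ENNReal.ofReal (π * r ^ 2) * ‖f c‖ₑ ≤ ∫⁻ z in closedBall c r, ‖f z‖ₑ := by
  -- `f` is only known to be continuous on the closed disk, so we integrate the measurable `g`.
  set g : ℂ → ℝ≥0∞ := (closedBall c r).indicator (‖f ·‖ₑ)
  have hcircle (ρ : ℝ) (hρ : ρ ∈ Ioc 0 r) :
      ENNReal.ofReal (2 * π) * ‖f c‖ₑ ≤ ∫⁻ θ in Ioo (-π) π, g (circleMap c ρ θ) := by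
    have hsub : ball c |ρ| ⊆ ball c r := ball_subset_ball ((abs_of_pos hρ.1).trans_le hρ.2)
    refine (hf.mono hsub).ofReal_two_pi_mul_enorm_le_lintegral.trans (lintegral_mono fun θ ↦ ?_)
    exact (indicator_of_mem (closedBall_subset_closedBall hρ.2
      (circleMap_mem_closedBall c hρ.1.le θ)) (‖f ·‖ₑ)).ge
  calc ENNReal.ofReal (π * r ^ 2) * ‖f c‖ₑ ≤ ∫⁻ z in closedBall c r, g z :=
        ofReal_mul_le_setLIntegral_closedBall
          (hf.continuousOn_ball.enorm.measurable_indicator measurableSet_closedBall) hr hcircle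
    _ = ∫⁻ z in closedBall c r, ‖f z‖ₑ :=
        setLIntegral_congr_fun measurableSet_closedBall fun z hz ↦ indicator_of_mem hz _

end Holomorphic

theorem summable_norm_and_tsum_le_of_tsum_enorm_le {ι F : Type*} [NormedAddCommGroup F]
    {x : ι → F} {B : ℝ} (hB : 0 ≤ B) (h : ∑' k, ‖x k‖ₑ ≤ ENNReal.ofReal B) :
    Summable (‖x ·‖) ∧ ∑' k, ‖x k‖ ≤ B := by
  have hs : Summable (‖x ·‖) :=
    tsum_enorm_ne_top_iff_summable_norm.1 (ne_top_of_le_ne_top ENNReal.ofReal_ne_top h)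
  refine ⟨hs, ?_⟩
  rw [← ENNReal.ofReal_le_ofReal_iff hB, ENNReal.ofReal_tsum_of_nonneg (fun _ ↦ norm_nonneg _) hs]
  simpa only [ofReal_norm] using h

/-- If `f` is holomorphic on the strip `S_σ = {z : |Im z| < σ}` with
`M := sup_{|y|<σ} ∫_ℝ |f(x+iy)| dx < ∞`, and `(w_k)` are points of the strip such that the
closed disks of radius `r` around them are pairwise disjoint and contained in the strip, then
`∑_k |f(w_k)| ≤ 2σM/(πr²)`. -/
theorem summable_on_strip (σ r M : ℝ) (hσ : 0 < σ) (hr : 0 < r) (f : ℂ → ℂ)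
    (hf : DifferentiableOn ℂ f {z : ℂ | |z.im| < σ})
    (hint : ∀ y : ℝ, |y| < σ → Integrable fun x : ℝ => f ((x : ℂ) + (y : ℂ) * Complex.I))
    (hM : ∀ y : ℝ, |y| < σ → (∫ x : ℝ, ‖f ((x : ℂ) + (y : ℂ) * Complex.I)‖) ≤ M)
    (w : ℕ → ℂ)
    (hdisj : Pairwise fun j k =>
      Disjoint (Metric.closedBall (w j) r) (Metric.closedBall (w k) r))
    (hsub : ∀ k, Metric.closedBall (w k) r ⊆ {z : ℂ | |z.im| < σ}) :
    Summable (fun k => ‖f (w k)‖) ∧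
      ∑' k, ‖f (w k)‖ ≤ 2 * σ * M / (Real.pi * r ^ 2) := by
  have hM0 : 0 ≤ M := (integral_nonneg fun _ ↦ norm_nonneg _).trans (hM 0 (by simpa using hσ))
  have hball (k : ℕ) :
      ENNReal.ofReal (π * r ^ 2) * ‖f (w k)‖ₑ ≤ ∫⁻ z in closedBall (w k) r, ‖f z‖ₑ :=
    (hf.mono (closure_ball_subset_closedBall.trans (hsub k))).diffContOnCl
      |>.ofReal_mul_enorm_le_setLIntegral hr.le
  have hstrip : ∫⁻ z in {z : ℂ | |z.im| < σ}, ‖f z‖ₑ ≤ ENNReal.ofReal (2 * σ * M) := by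
    rw [ENNReal.ofReal_mul (by positivity)]
    refine setLIntegral_strip_le hf.continuousOn.enorm fun y hy ↦ ?_
    rw [← ofReal_integral_norm_eq_lintegral_enorm (hint y hy)]
    exact ENNReal.ofReal_le_ofReal (hM y hy)
  have htotal : ENNReal.ofReal (π * r ^ 2) * ∑' k, ‖f (w k)‖ₑ ≤ ENNReal.ofReal (2 * σ * M) :=
    calc ENNReal.ofReal (π * r ^ 2) * ∑' k, ‖f (w k)‖ₑ
        = ∑' k, ENNReal.ofReal (π * r ^ 2) * ‖f (w k)‖ₑ := ENNReal.tsum_mul_left.symm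
      _ ≤ ∑' k, ∫⁻ z in closedBall (w k) r, ‖f z‖ₑ := ENNReal.tsum_le_tsum hball
      _ = ∫⁻ z in ⋃ k, closedBall (w k) r, ‖f z‖ₑ :=
          (lintegral_iUnion (fun _ ↦ measurableSet_closedBall) hdisj _).symm
      _ ≤ ∫⁻ z in {z : ℂ | |z.im| < σ}, ‖f z‖ₑ := lintegral_mono_set (iUnion_subset hsub)
      _ ≤ ENNReal.ofReal (2 * σ * M) := hstrip
  refine summable_norm_and_tsum_le_of_tsum_enorm_le (by positivity) ?_
  rw [ENNReal.ofReal_div_of_pos (by positivity), ENNReal.le_div_iff_mul_le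
    (Or.inl (ENNReal.ofReal_pos.2 (by positivity)).ne') (Or.inl ENNReal.ofReal_ne_top), mul_comm]
  exact htotal
end

section
/- Let (λ_k)_{k≥1} be a strictly increasing sequence of positive real numbers and let λ ∈ ℂ with λ ≠ λ_k for all k. Assume C := sup_{k≥1} max(|λ|, λ_k) / |λ - λ_k| < ∞. Then ∑_{k=1}^∞ | λ/(λ - λ_{k+1}) - λ/(λ - λ_k) | ≤ 4 C². -/
/-! With `r = ‖λ‖`, the `k`-th term equals `r (λₖ₊₁ - λₖ) / (‖λ - λₖ₊₁‖ ‖λ - λₖ‖)`. The hypothesis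
bounds each distance `‖λ - λⱼ‖` below by both `r / C` and `λⱼ / C`, so the term is at most `C²`
times each of `(λₖ₊₁ - λₖ) / r`, `(λₖ₊₁ - λₖ) / λₖ₊₁` and `r (λₖ₊₁ - λₖ) / (λₖ λₖ₊₁)`. The smallest
of these is dominated by the increment of `φ(x) = ∫₀ˣ min (1 / r) (r / y²) dy`, an increasing
function with values in `[0, 2]`, so the series telescopes to at most `2 C²`. -/

open Finset

theorem summable_and_tsum_le_of_le_sub {f g : ℕ → ℝ} {M : ℝ} (hf : ∀ k, 0 ≤ f k)
    (hfg : ∀ k, f k ≤ g (k + 1) - g k) (hg : ∀ n, g n - g 0 ≤ M) :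
    Summable f ∧ ∑' k, f k ≤ M := by
  have partial_le : ∀ n, ∑ k ∈ range n, f k ≤ M := fun n =>
    calc ∑ k ∈ range n, f k ≤ ∑ k ∈ range n, (g (k + 1) - g k) := sum_le_sum fun k _ => hfg k
      _ = g n - g 0 := sum_range_sub g n
      _ ≤ M := hg n
  have hsum : Summable f := summable_of_sum_range_le hf partial_le
  exact ⟨hsum, hsum.tsum_le_of_sum_range_le partial_le⟩

theorem div_sub_sub_div_sub {K : Type*} [Field K] {z a b : K} (ha : z - a ≠ 0) (hb : z - b ≠ 0) :
    z / (z - a) - z / (z - b) = z * (a - b) / ((z - a) * (z - b)) := by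
  field_simp
  ring

theorem div_mul_le_sq_mul_div_mul {X a₁ a₂ d₁ d₂ C : ℝ} (hX : 0 ≤ X) (ha₁ : 0 < a₁)
    (ha₂ : 0 < a₂) (h₁ : a₁ ≤ C * d₁) (h₂ : a₂ ≤ C * d₂) :
    X / (d₁ * d₂) ≤ C ^ 2 * (X / (a₁ * a₂)) := by
  have hC : C ≠ 0 := by rintro rfl; linarith
  calc X / (d₁ * d₂) = C ^ 2 * (X / ((C * d₁) * (C * d₂))) := by field_simp
    _ ≤ C ^ 2 * (X / (a₁ * a₂)) := by gcongr; linarith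

/-- `∫₀ˣ min (1 / r) (r / y ^ 2) dy` for `0 < r` and `0 ≤ x`. -/
noncomputable def telescopingPotential (r x : ℝ) : ℝ := min (x / r) 1 + max 0 (1 - r / x)

theorem telescopingPotential_of_le {r x : ℝ} (hr : 0 < r) (hx : 0 < x) (h : x ≤ r) :
    telescopingPotential r x = x / r := by
  have : 1 ≤ r / x := (one_le_div hx).2 h
  rw [telescopingPotential, min_eq_left ((div_le_one hr).2 h), max_eq_left (by linarith),
    add_zero]

theorem telescopingPotential_of_ge {r x : ℝ} (hr : 0 < r) (h : r ≤ x) :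
    telescopingPotential r x = 2 - r / x := by
  have : r / x ≤ 1 := (div_le_one (hr.trans_le h)).2 h
  rw [telescopingPotential, min_eq_right ((one_le_div hr).2 h), max_eq_right (by linarith)]
  ring

theorem telescopingPotential_sub_le_two {r x y : ℝ} (hr : 0 ≤ r) (hx : 0 ≤ x) (hy : 0 ≤ y) :
    telescopingPotential r y - telescopingPotential r x ≤ 2 := by
  have h₁ : 0 ≤ min (x / r) 1 := le_min (by positivity) zero_le_one
  have h₂ : max 0 (1 - r / y) ≤ 1 := max_le zero_le_one (by linarith [div_nonneg hr hy])
  unfold telescopingPotential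
  linarith [min_le_right (y / r) 1, le_max_left 0 (1 - r / x)]

theorem min_le_telescopingPotential_sub {r s t : ℝ} (hr : 0 < r) (hs : 0 < s) (hst : s ≤ t) :
    min (min ((t - s) / r) ((t - s) / t)) (r * (t - s) / (s * t)) ≤
      telescopingPotential r t - telescopingPotential r s := by
  have ht : 0 < t := hs.trans_le hst
  rcases le_total t r with htr | hrt
  · rw [telescopingPotential_of_le hr ht htr, telescopingPotential_of_le hr hs (hst.trans htr),
      ← sub_div]
    exact (min_le_left _ _).trans (min_le_left _ _)
  rcases le_total s r with hsr | hrs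
  · rw [telescopingPotential_of_ge hr hrt, telescopingPotential_of_le hr hs hsr]
    refine (min_le_left _ _).trans ((min_le_right _ _).trans ?_)
    -- the gap is `(1 - s / r) * (1 - r / t) ≥ 0`
    have hgap : 0 ≤ (r - s) * (t - r) := mul_nonneg (by linarith) (by linarith)
    rw [div_le_iff₀ ht]
    field_simp
    nlinarith
  · rw [telescopingPotential_of_ge hr hrt, telescopingPotential_of_ge hr hrs]
    refine (min_le_right _ _).trans (le_of_eq ?_)
    field_simp
    ring

theorem norm_div_sub_sub_div_sub_le {z : ℂ} {s t C : ℝ} (hs : 0 < s) (hst : s ≤ t)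
    (hzs : z ≠ s) (hzt : z ≠ t) (hCs : max ‖z‖ s ≤ C * ‖z - s‖) (hCt : max ‖z‖ t ≤ C * ‖z - t‖) :
    ‖z / (z - t) - z / (z - s)‖ ≤
      C ^ 2 * (telescopingPotential ‖z‖ t - telescopingPotential ‖z‖ s) := by
  rcases eq_or_ne z 0 with rfl | hz
  · simp [telescopingPotential]
  set r := ‖z‖
  have hr : 0 < r := norm_pos_iff.2 hz
  have hX : 0 ≤ r * (t - s) := mul_nonneg hr.le (sub_nonneg.2 hst)
  have hnorm : ‖z / (z - t) - z / (z - s)‖ = r * (t - s) / (‖z - t‖ * ‖z - s‖) := by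
    rw [div_sub_sub_div_sub (sub_ne_zero.2 hzt) (sub_ne_zero.2 hzs), norm_div, norm_mul, norm_mul,
      ← Complex.ofReal_sub, Complex.norm_real, Real.norm_of_nonneg (sub_nonneg.2 hst)]
  calc ‖z / (z - t) - z / (z - s)‖
      ≤ C ^ 2 * min (min ((t - s) / r) ((t - s) / t)) (r * (t - s) / (s * t)) := by
        rw [hnorm, mul_min_of_nonneg _ _ (sq_nonneg C), mul_min_of_nonneg _ _ (sq_nonneg C)]
        refine le_min (le_min ?_ ?_) ?_
        · simpa [mul_div_mul_left _ _ hr.ne'] using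
            div_mul_le_sq_mul_div_mul hX hr hr ((le_max_left _ _).trans hCt) ((le_max_left _ _).trans hCs)
        · simpa [mul_comm t, mul_div_mul_left _ _ hr.ne'] using
            div_mul_le_sq_mul_div_mul hX (hs.trans_le hst) hr ((le_max_right _ _).trans hCt) ((le_max_left _ _).trans hCs)
        · simpa [mul_comm t] using
            div_mul_le_sq_mul_div_mul hX (hs.trans_le hst) hs ((le_max_right _ _).trans hCt) ((le_max_right _ _).trans hCs)
    _ ≤ C ^ 2 * (telescopingPotential r t - telescopingPotential r s) := by
        gcongr
        exact min_le_telescopingPotential_sub hr hs hst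

/-- Let `(λ_k)` be a strictly increasing sequence of positive reals and `λ ∈ ℂ` with
`λ ≠ λ_k` for all `k`. If `C` bounds `max(|λ|, λ_k)/|λ - λ_k|` for all `k`, then the
telescoping resolvent series `∑_k |λ/(λ-λ_{k+1}) - λ/(λ-λ_k)|` converges and is `≤ 4C²`. -/
theorem telescoping_resolvent_sum (lam : ℕ → ℝ) (hmono : StrictMono lam)
    (hpos : ∀ k, 0 < lam k) (z : ℂ) (hz : ∀ k, z ≠ (lam k : ℂ)) (C : ℝ)
    (hC : ∀ k, max ‖z‖ (lam k) / ‖z - (lam k : ℂ)‖ ≤ C) :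
    Summable (fun k => ‖z / (z - (lam (k + 1) : ℂ)) - z / (z - (lam k : ℂ))‖) ∧
      ∑' k, ‖z / (z - (lam (k + 1) : ℂ)) - z / (z - (lam k : ℂ))‖ ≤ 4 * C ^ 2 := by
  have hC' k : max ‖z‖ (lam k) ≤ C * ‖z - lam k‖ :=
    (div_le_iff₀ (norm_pos_iff.2 (sub_ne_zero.2 (hz k)))).1 (hC k)
  obtain ⟨hsum, hle⟩ := summable_and_tsum_le_of_le_sub (M := C ^ 2 * 2)
    (g := fun k => C ^ 2 * telescopingPotential ‖z‖ (lam k)) (fun k => norm_nonneg _)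
    (fun k => by
      rw [← mul_sub]
      exact norm_div_sub_sub_div_sub_le (hpos k) (hmono k.lt_succ_self).le (hz k) (hz (k + 1))
        (hC' k) (hC' (k + 1)))
    (fun n => by
      rw [← mul_sub]
      exact mul_le_mul_of_nonneg_left
        (telescopingPotential_sub_le_two (norm_nonneg z) (hpos 0).le (hpos n).le) (sq_nonneg C))
  exact ⟨hsum, hle.trans (by nlinarith [sq_nonneg C])⟩
end

section
/- Let c > 1 and let (μ_k)_{k ∈ ℕ} be complex numbers with Re(μ_k) > 0 for all k and |μ_{k+1}| ≥ c |μ_k| > 0 for all k. Then for every k, ∏_{j ≠ k} | (μ_k - μ_j) / (μ_k + conj(μ_j)) | ≥ ( ∏_{d=1}^∞ (1 - 2/(c^d + 1)) )² > 0. -/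
/-!
For `Re a, Re b > 0` one has `‖a - b‖ ≤ ‖a + conj b‖`, and if `‖a‖ ≥ t ‖b‖` with `t ≥ 1` then
`‖a - b‖ / ‖a + conj b‖ ≥ (‖a‖ - ‖b‖) / (‖a‖ + ‖b‖) ≥ 1 - 2 / (t + 1)`. The growth condition gives
`t = c ^ |j - k|`, so the `j`-th factor is at least `g (|j - k| - 1)` with
`g d = 1 - 2 / (c ^ (d + 1) + 1)`. Each gap occurs at most twice, once on each side of `k`, so
comparing logarithms along the injection `j ↦ (side, gap)` into `ℕ ⊕ ℕ` bounds the product below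
by `(∏ g) ^ 2`, which is positive because `1 - g d` decays geometrically.
-/

open Real ComplexConjugate

lemma pow_sub_mul_le_of_mul_le_succ {u : ℕ → ℝ} {c : ℝ} (hc : 0 ≤ c)
    (h : ∀ k, c * u k ≤ u (k + 1)) {n m : ℕ} (hnm : n ≤ m) : c ^ (m - n) * u n ≤ u m := by
  simpa [Nat.add_sub_cancel' hnm] using
    geom_le (u := fun i => u (n + i)) hc (m - n) fun i _ => h (n + i)

namespace Complex

lemma norm_sub_le_norm_add_conj {a b : ℂ} (ha : 0 ≤ a.re) (hb : 0 ≤ b.re) :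
    ‖a - b‖ ≤ ‖a + conj b‖ := by
  rw [← sq_le_sq₀ (norm_nonneg _) (norm_nonneg _), Complex.sq_norm, Complex.sq_norm,
    normSq_apply, normSq_apply]
  simp only [sub_re, sub_im, add_re, add_im, conj_re, conj_im]
  nlinarith [mul_nonneg ha hb]

lemma norm_sub_div_add_conj_le_one {a b : ℂ} (ha : 0 ≤ a.re) (hb : 0 ≤ b.re) :
    ‖(a - b) / (a + conj b)‖ ≤ 1 := by
  rw [norm_div]
  exact div_le_one_of_le₀ (norm_sub_le_norm_add_conj ha hb) (norm_nonneg _)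

lemma norm_sub_div_add_conj_comm (a b : ℂ) :
    ‖(a - b) / (a + conj b)‖ = ‖(b - a) / (b + conj a)‖ := by
  rw [norm_div, norm_div, norm_sub_rev, ← norm_conj (a + conj b), map_add, conj_conj, add_comm]

lemma one_sub_two_div_add_one_le_norm_sub_div_add_conj {a b : ℂ} {t : ℝ} (ht : 1 ≤ t)
    (hab : t * ‖b‖ ≤ ‖a‖) (hden : a + conj b ≠ 0) :
    1 - 2 / (t + 1) ≤ ‖(a - b) / (a + conj b)‖ := by
  have hden' : ‖a + conj b‖ ≤ ‖a‖ + ‖b‖ := (norm_add_le _ _).trans_eq (by rw [norm_conj])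
  have hsum : 0 < ‖a‖ + ‖b‖ := (norm_pos_iff.2 hden).trans_le hden'
  calc 1 - 2 / (t + 1) ≤ (‖a‖ - ‖b‖) / (‖a‖ + ‖b‖) := by
        rw [le_div_iff₀ hsum, one_sub_div (by linarith), div_mul_eq_mul_div,
          div_le_iff₀ (by linarith)]
        nlinarith
    _ ≤ ‖a - b‖ / ‖a + conj b‖ :=
        div_le_div₀ (norm_nonneg _) (norm_sub_norm_le a b) (norm_pos_iff.2 hden) hden'
    _ = ‖(a - b) / (a + conj b)‖ := (norm_div _ _).symm

end Complex

namespace Real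

variable {ι κ : Type*} {f : ι → ℝ} {g : κ → ℝ} {e : ι → κ}

lemma summable_log_of_le_comp_injective (he : e.Injective) (hg : ∀ x, 0 < g x)
    (hlog : Summable fun x => log (g x)) (hgf : ∀ i, g (e i) ≤ f i) (hf : ∀ i, f i ≤ 1) :
    Summable fun i => log (f i) :=
  (hlog.comp_injective he).norm.of_norm_bounded fun i =>
    abs_le_abs_of_nonpos (log_nonpos ((hg _).le.trans (hgf i)) (hf i))
      (log_le_log (hg _) (hgf i))

lemma tprod_le_tprod_of_le_comp_injective (he : e.Injective) (hg : ∀ x, 0 < g x)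
    (hg1 : ∀ x, g x ≤ 1) (hlog : Summable fun x => log (g x)) (hgf : ∀ i, g (e i) ≤ f i)
    (hf : ∀ i, f i ≤ 1) : ∏' x, g x ≤ ∏' i, f i := by
  have hf0 : ∀ i, 0 < f i := fun i => (hg _).trans_le (hgf i)
  have hflog := summable_log_of_le_comp_injective he hg hlog hgf hf
  rw [← rexp_tsum_eq_tprod hg hlog, ← rexp_tsum_eq_tprod hf0 hflog, exp_le_exp,
    ← neg_le_neg_iff, ← tsum_neg, ← tsum_neg]
  exact hflog.neg.tsum_le_tsum_of_inj e he
    (fun x _ => neg_nonneg.2 (log_nonpos (hg x).le (hg1 x)))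
    (fun i => neg_le_neg (log_le_log (hg _) (hgf i))) hlog.neg

end Real

lemma summable_log_one_sub_two_div_pow_succ_add_one {c : ℝ} (hc : 1 < c) :
    Summable fun d : ℕ => log (1 - 2 / (c ^ (d + 1) + 1)) := by
  simp_rw [sub_eq_add_neg]
  refine summable_log_one_add_of_summable (Summable.neg ?_)
  refine Summable.of_nonneg_of_le (fun d => by positivity) (fun d => ?_)
    ((summable_geometric_of_lt_one (by positivity) (inv_lt_one_of_one_lt₀ hc)).mul_left 2)
  rw [inv_pow, ← div_eq_mul_inv]
  have : c ^ d ≤ c ^ (d + 1) := pow_le_pow_right₀ hc.le d.le_succ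
  gcongr
  linarith

def gapIndex (k : ℕ) (j : {j : ℕ // j ≠ k}) : ℕ ⊕ ℕ :=
  if j.1 < k then .inl (k - 1 - j.1) else .inr (j.1 - k - 1)

lemma gapIndex_injective (k : ℕ) : (gapIndex k).Injective := by
  rintro ⟨i, hi⟩ ⟨j, hj⟩ h
  simp only [gapIndex, Subtype.mk.injEq] at h ⊢
  split_ifs at h <;> simp only [Sum.inl.injEq, Sum.inr.injEq] at h <;> omega

section Hadamard

variable {c : ℝ} {μ : ℕ → ℂ}

lemma one_sub_two_div_le_norm_of_le (hc : 1 ≤ c) (hre : ∀ k, 0 < (μ k).re)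
    (hgrow : ∀ k, c * ‖μ k‖ ≤ ‖μ (k + 1)‖) {n m : ℕ} (hnm : n ≤ m) :
    1 - 2 / (c ^ (m - n) + 1) ≤ ‖(μ m - μ n) / (μ m + conj (μ n))‖ := by
  refine Complex.one_sub_two_div_add_one_le_norm_sub_div_add_conj (one_le_pow₀ hc)
    (pow_sub_mul_le_of_mul_le_succ (zero_le_one.trans hc) hgrow hnm) fun h => ?_
  have := congrArg Complex.re h
  simp only [Complex.add_re, Complex.conj_re, Complex.zero_re] at this
  linarith [hre m, hre n]

lemma one_sub_two_div_le_norm_of_gapIndex (hc : 1 ≤ c) (hre : ∀ k, 0 < (μ k).re)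
    (hgrow : ∀ k, c * ‖μ k‖ ≤ ‖μ (k + 1)‖) (k : ℕ) (j : {j : ℕ // j ≠ k}) :
    1 - 2 / (c ^ ((gapIndex k j).elim id id + 1) + 1) ≤ ‖(μ k - μ j) / (μ k + conj (μ j))‖ := by
  obtain ⟨j, hj⟩ := j
  dsimp only [gapIndex]
  split_ifs with h
  · have hgap : k - 1 - j + 1 = k - j := by omega
    simpa [hgap] using one_sub_two_div_le_norm_of_le hc hre hgrow h.le
  · have hgap : j - k - 1 + 1 = j - k := by omega
    rw [Complex.norm_sub_div_add_conj_comm]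
    simpa [hgap] using one_sub_two_div_le_norm_of_le hc hre hgrow (not_lt.1 h)

end Hadamard

theorem hadamard_interpolating_separation_general (c : ℝ) (hc : 1 < c) (μ : ℕ → ℂ)
    (hre : ∀ k, 0 < (μ k).re)
    (hgrow : ∀ k, c * ‖μ k‖ ≤ ‖μ (k + 1)‖) (k : ℕ) :
    Multipliable (fun j : {j : ℕ // j ≠ k} =>
        ‖(μ k - μ j.1) / (μ k + starRingEnd ℂ (μ j.1))‖) ∧
      (∏' d : ℕ, (1 - 2 / (c ^ (d + 1) + 1))) ^ 2 ≤
        ∏' j : {j : ℕ // j ≠ k}, ‖(μ k - μ j.1) / (μ k + starRingEnd ℂ (μ j.1))‖ ∧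
      0 < (∏' d : ℕ, (1 - 2 / (c ^ (d + 1) + 1))) ^ 2 := by
  set g : ℕ → ℝ := fun d => 1 - 2 / (c ^ (d + 1) + 1)
  set G : ℕ ⊕ ℕ → ℝ := fun x => g (x.elim id id)
  have hg : ∀ d, 0 < g d := fun d => by
    have : 1 < c ^ (d + 1) := one_lt_pow₀ hc d.succ_ne_zero
    simp only [g, sub_pos, div_lt_one (by positivity : (0 : ℝ) < c ^ (d + 1) + 1)]
    linarith
  have hg1 : ∀ d, g d ≤ 1 := fun d => sub_le_self _ (by positivity)
  have hlog : Summable fun d => log (g d) := summable_log_one_sub_two_div_pow_succ_add_one hc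
  have hGlog : Summable fun x => log (G x) := Summable.sum _ hlog hlog
  have hGf := one_sub_two_div_le_norm_of_gapIndex hc.le hre hgrow k
  have hf1 : ∀ j : {j : ℕ // j ≠ k}, ‖(μ k - μ j) / (μ k + conj (μ j))‖ ≤ 1 :=
    fun j => Complex.norm_sub_div_add_conj_le_one (hre k).le (hre j).le
  have hgmul : Multipliable g := multipliable_of_summable_log hg hlog
  have hprod_pos : 0 < ∏' d, g d := rexp_tsum_eq_tprod hg hlog ▸ exp_pos _
  refine ⟨multipliable_of_summable_log (fun j => (hg _).trans_le (hGf j))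
    (summable_log_of_le_comp_injective (gapIndex_injective k) (fun x => hg _) hGlog hGf hf1),
    ?_, pow_pos hprod_pos 2⟩
  calc (∏' d, g d) ^ 2 = ∏' x, G x := by
        rw [Multipliable.tprod_sum (f := G) hgmul hgmul, sq]; rfl
    _ ≤ _ := tprod_le_tprod_of_le_comp_injective (g := G) (gapIndex_injective k) (fun x => hg _)
      (fun x => hg1 _) hGlog hGf hf1

/-- Carleson-type separation for Hadamard sequences: if `Re μ_k > 0`,
`|μ_{k+1}| ≥ c|μ_k| > 0` with `c > 1`, then for every `k` the product
`∏_{j ≠ k} |(μ_k - μ_j)/(μ_k + conj μ_j)|` converges and is at least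
`(∏_{d=1}^∞ (1 - 2/(c^d+1)))² > 0`. -/
theorem hadamard_interpolating_separation (c : ℝ) (hc : 1 < c) (μ : ℕ → ℂ)
    (hre : ∀ k, 0 < (μ k).re) (hpos : ∀ k, 0 < ‖μ k‖)
    (hgrow : ∀ k, c * ‖μ k‖ ≤ ‖μ (k + 1)‖) (k : ℕ) :
    Multipliable (fun j : {j : ℕ // j ≠ k} =>
        ‖(μ k - μ j.1) / (μ k + starRingEnd ℂ (μ j.1))‖) ∧
      (∏' d : ℕ, (1 - 2 / (c ^ (d + 1) + 1))) ^ 2 ≤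
        ∏' j : {j : ℕ // j ≠ k}, ‖(μ k - μ j.1) / (μ k + starRingEnd ℂ (μ j.1))‖ ∧
      0 < (∏' d : ℕ, (1 - 2 / (c ^ (d + 1) + 1))) ^ 2 :=
  hadamard_interpolating_separation_general c hc μ hre hgrow k
end

section
/- Let X be a complex Banach space, α a Euclidean structure on X, and Γ ⊆ L(X) an α-bounded family of operators. Then the absolutely convex hull of Γ, i.e. the set of all finite sums ∑_{j=1}^m c_j T_j with T_j ∈ Γ, c_j ∈ ℂ and ∑_{j=1}^m |c_j| ≤ 1, is α-bounded with the same α-bound: ‖absconv(Γ)‖_α = ‖Γ‖_α. -/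
/-- The `ℓ²_n → ℓ²_m` operator norm of a complex matrix. -/
noncomputable def matrixOpNorm {m n : ℕ} (A : Matrix (Fin m) (Fin n) ℂ) : ℝ :=
  ‖LinearMap.toContinuousLinearMap (Matrix.toEuclideanLin A)‖

/-- A *Euclidean structure* on a complex Banach space `X`: a family of norms on the
spaces `X^n`, `n ∈ ℕ`, such that `‖(x)‖_α = ‖x‖` for `x ∈ X` and
`‖A x‖_α ≤ ‖A‖ ‖x‖_α` for every scalar matrix `A` acting coordinatewise, where `‖A‖` is
the `ℓ² → ℓ²` operator norm. -/
structure EuclideanStructure (X : Type*) [NormedAddCommGroup X] [NormedSpace ℂ X] where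
  N : ∀ {n : ℕ}, (Fin n → X) → ℝ
  nonneg : ∀ {n : ℕ} (x : Fin n → X), 0 ≤ N x
  add_le : ∀ {n : ℕ} (x y : Fin n → X), N (x + y) ≤ N x + N y
  smul_eq : ∀ {n : ℕ} (c : ℂ) (x : Fin n → X), N (c • x) = ‖c‖ * N x
  eq_zero : ∀ {n : ℕ} (x : Fin n → X), N x = 0 → x = 0
  single : ∀ x : X, N (fun _ : Fin 1 => x) = ‖x‖
  matrix_le : ∀ {m n : ℕ} (A : Matrix (Fin m) (Fin n) ℂ) (x : Fin n → X),
    N (fun i => ∑ j, A i j • x j) ≤ matrixOpNorm A * N x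

/-- The set of values `‖(T₁x₁,…,Tₙxₙ)‖_α` over all choices `T_k ∈ Γ` (repetitions
allowed) and `x ∈ X^n` with `‖x‖_α ≤ 1`; its supremum is the α-bound `‖Γ‖_α`. -/
def alphaBoundSet {X : Type*} [NormedAddCommGroup X] [NormedSpace ℂ X]
    (α : EuclideanStructure X) (Γ : Set (X →L[ℂ] X)) : Set ℝ :=
  {r | ∃ (n : ℕ) (T : Fin n → X →L[ℂ] X) (x : Fin n → X),
    (∀ k, T k ∈ Γ) ∧ α.N x ≤ 1 ∧ r = α.N fun k => T k (x k)}

/-- A family of operators `Γ` is α-bounded if the quantity `‖Γ‖_α` is finite. -/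
def IsAlphaBounded {X : Type*} [NormedAddCommGroup X] [NormedSpace ℂ X]
    (α : EuclideanStructure X) (Γ : Set (X →L[ℂ] X)) : Prop :=
  BddAbove (alphaBoundSet α Γ)

/-- The α-bound `‖Γ‖_α` of a family of operators `Γ`. -/
noncomputable def alphaBound {X : Type*} [NormedAddCommGroup X] [NormedSpace ℂ X]
    (α : EuclideanStructure X) (Γ : Set (X →L[ℂ] X)) : ℝ :=
  sSup (alphaBoundSet α Γ)

/-- The absolutely convex hull of a family of operators: all finite sums `∑ c_j T_j` with
`T_j ∈ Γ` and `∑ |c_j| ≤ 1`. -/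
def absConvexOpHull {X : Type*} [NormedAddCommGroup X] [NormedSpace ℂ X]
    (Γ : Set (X →L[ℂ] X)) : Set (X →L[ℂ] X) :=
  {S | ∃ (m : ℕ) (c : Fin m → ℂ) (T : Fin m → X →L[ℂ] X),
    (∀ j, T j ∈ Γ) ∧ (∑ j, ‖c j‖) ≤ 1 ∧ S = ∑ j, c j • T j}

/- ======== auxiliary lemmas ======== -/

lemma matrixOpNorm_le' {m n : ℕ} (A : Matrix (Fin m) (Fin n) ℂ) (C : ℝ) (hC : 0 ≤ C)
    (h : ∀ v : Fin n → ℂ, (∑ i, ‖∑ j, A i j * v j‖ ^ 2) ≤ C ^ 2 * ∑ j, ‖v j‖ ^ 2) :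
    matrixOpNorm A ≤ C := by
  apply ContinuousLinearMap.opNorm_le_bound _ hC
  intro v
  rw [EuclideanSpace.norm_eq, EuclideanSpace.norm_eq]
  have key : ∀ i, (LinearMap.toContinuousLinearMap (Matrix.toEuclideanLin A)) v i
      = ∑ j, A i j * v j := by
    intro i
    simp [Matrix.toEuclideanLin_apply, Matrix.mulVec, dotProduct]
  simp_rw [key]
  calc √(∑ i, ‖∑ j, A i j * v j‖ ^ 2)
      ≤ √(C ^ 2 * ∑ j, ‖v j‖ ^ 2) := Real.sqrt_le_sqrt (h v)
    _ = C * √(∑ j, ‖v j‖ ^ 2) := by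
        rw [Real.sqrt_mul (sq_nonneg C), Real.sqrt_sq hC]

lemma pad_sum {β : Type*} [AddCommMonoid β] {mk M : ℕ} (hmk : mk ≤ M) (f : Fin mk → β) :
    ∑ j : Fin mk, f j = ∑ j : Fin M, (if h : (j : ℕ) < mk then f ⟨j, h⟩ else 0) := by
  set g : ℕ → β := fun jn => if h : jn < mk then f ⟨jn, h⟩ else 0 with hg
  have h1 : ∑ j : Fin mk, f j = ∑ j ∈ Finset.range mk, g j := by
    rw [← Fin.sum_univ_eq_sum_range g mk]
    exact Finset.sum_congr rfl fun j _ => by simp [hg, j.isLt]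
  have h2 : ∑ j ∈ Finset.range mk, g j = ∑ j ∈ Finset.range M, g j :=
    Finset.sum_subset (Finset.range_subset_range.2 hmk) (fun j _ hj => by
      simp only [Finset.mem_range, not_lt] at hj
      simp [hg, Nat.not_lt.2 hj])
  rw [h1, h2, ← Fin.sum_univ_eq_sum_range g M]

section AuxES
variable {X : Type*} [NormedAddCommGroup X] [NormedSpace ℂ X] (α : EuclideanStructure X)
  (Γ : Set (X →L[ℂ] X))

lemma ES_N_zero {n : ℕ} : α.N (0 : Fin n → X) = 0 := by
  have h := α.smul_eq (0 : ℂ) (0 : Fin n → X)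
  simpa using h

lemma zero_mem_alphaBoundSet : (0 : ℝ) ∈ alphaBoundSet α Γ := by
  refine ⟨0, Fin.elim0, Fin.elim0, fun k => k.elim0, ?_, ?_⟩
  · have h : (Fin.elim0 : Fin 0 → X) = 0 := funext fun k => k.elim0
    rw [h, ES_N_zero]; exact zero_le_one
  · have h : (fun k : Fin 0 => (Fin.elim0 : Fin 0 → X →L[ℂ] X) k ((Fin.elim0 : Fin 0 → X) k))
        = (0 : Fin 0 → X) := funext fun k => k.elim0
    rw [h, ES_N_zero]

lemma alphaBound_nonneg (hΓ : IsAlphaBounded α Γ) : 0 ≤ alphaBound α Γ :=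
  le_csSup hΓ (zero_mem_alphaBoundSet α Γ)

lemma diag_apply_le (hΓ : IsAlphaBounded α Γ) {N : ℕ} (U : Fin N → X →L[ℂ] X)
    (hU : ∀ i, U i ∈ Γ) (y : Fin N → X) :
    α.N (fun i => U i (y i)) ≤ alphaBound α Γ * α.N y := by
  rcases eq_or_lt_of_le (α.nonneg y) with h0 | hpos
  · have hy0 : y = 0 := α.eq_zero y h0.symm
    have h : (fun i => U i (y i)) = (0 : Fin N → X) := by
      funext i; rw [hy0]; simp
    rw [h, ES_N_zero, ← h0, mul_zero]
  · set t := α.N y with ht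
    have htne : (t : ℂ) ≠ 0 := Complex.ofReal_ne_zero.2 (ne_of_gt hpos)
    set y' : Fin N → X := ((t : ℂ)⁻¹) • y with hy'
    have hNy' : α.N y' ≤ 1 := by
      rw [hy', α.smul_eq, norm_inv, Complex.norm_real, Real.norm_of_nonneg hpos.le, ← ht,
        inv_mul_cancel₀ (ne_of_gt hpos)]
    have hle : α.N (fun i => U i (y' i)) ≤ alphaBound α Γ :=
      le_csSup hΓ ⟨N, U, y', hU, hNy', rfl⟩
    have heq : (fun i => U i (y i)) = (t : ℂ) • fun i => U i (y' i) := by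
      funext i
      simp only [Pi.smul_apply, hy', ← map_smul, smul_smul]
      rw [mul_inv_cancel₀ htne, one_smul]
    calc α.N (fun i => U i (y i)) = ‖(t : ℂ)‖ * α.N (fun i => U i (y' i)) := by
          rw [heq, α.smul_eq]
      _ ≤ ‖(t : ℂ)‖ * alphaBound α Γ := by
          exact mul_le_mul_of_nonneg_left hle (norm_nonneg _)
      _ = alphaBound α Γ * t := by
          rw [Complex.norm_real, Real.norm_of_nonneg hpos.le, mul_comm]

end AuxES

lemma hull_bound_le {X : Type*} [NormedAddCommGroup X] [NormedSpace ℂ X]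
    (α : EuclideanStructure X) (Γ : Set (X →L[ℂ] X)) (hΓ : IsAlphaBounded α Γ) :
    ∀ r ∈ alphaBoundSet α (absConvexOpHull Γ), r ≤ alphaBound α Γ := by
  rintro r ⟨n, T, x, hT, hx, rfl⟩
  by_cases hne : Γ.Nonempty
  swap
  · -- Γ is empty: every T k is 0
    have hT0 : ∀ k, T k = 0 := by
      intro k
      obtain ⟨m, c, S, hS, -, hTk⟩ := hT k
      have hm : m = 0 := by
        by_contra hm
        exact hne ⟨S ⟨0, Nat.pos_of_ne_zero hm⟩, hS _⟩
      subst hm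
      simpa using hTk
    have h : (fun k => T k (x k)) = (0 : Fin n → X) := by
      funext k; rw [hT0 k]; rfl
    rw [h, ES_N_zero]
    exact alphaBound_nonneg α Γ hΓ
  obtain ⟨T₀, hT₀⟩ := hne
  -- choose representations
  have hT' := hT
  simp only [absConvexOpHull, Set.mem_setOf_eq] at hT'
  choose m c S hS hc hTk using hT'
  set M := Finset.univ.sup m with hMdef
  have hM : ∀ k, m k ≤ M := fun k => Finset.le_sup (Finset.mem_univ k)
  set c' : Fin n → Fin M → ℂ :=
    fun k j => if h : (j : ℕ) < m k then c k ⟨j, h⟩ else 0 with hc'def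
  set S' : Fin n → Fin M → (X →L[ℂ] X) :=
    fun k j => if h : (j : ℕ) < m k then S k ⟨j, h⟩ else T₀ with hS'def
  have hS' : ∀ k j, S' k j ∈ Γ := by
    intro k j
    rw [hS'def]
    dsimp only
    split
    · exact hS k _
    · exact hT₀
  have hc' : ∀ k, (∑ j : Fin M, ‖c' k j‖) ≤ 1 := by
    intro k
    have : (∑ j : Fin M, ‖c' k j‖)
        = ∑ j : Fin M, (if h : (j : ℕ) < m k then ‖c k ⟨j, h⟩‖ else 0) := by
      refine Finset.sum_congr rfl fun j _ => ?_
      rw [hc'def]; dsimp only; split <;> simp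
    rw [this, ← pad_sum (hM k) (fun j => ‖c k j‖)]
    exact hc k
  have hT2 : ∀ k, T k = ∑ j : Fin M, c' k j • S' k j := by
    intro k
    rw [hTk k, pad_sum (hM k) (fun j => c k j • S k j)]
    refine Finset.sum_congr rfl fun j _ => ?_
    rw [hc'def, hS'def]; dsimp only
    split
    · rfl
    · simp
  -- square-root decomposition
  set s : Fin n → Fin M → ℝ := fun k j => √‖c' k j‖ with hsdef
  set b : Fin n → Fin M → ℂ :=
    fun k j => if c' k j = 0 then 0 else ((s k j : ℝ) : ℂ)⁻¹ * c' k j with hbdef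
  have hs_sq : ∀ k j, s k j ^ 2 = ‖c' k j‖ := fun k j => Real.sq_sqrt (norm_nonneg _)
  have hs_nonneg : ∀ k j, 0 ≤ s k j := fun k j => Real.sqrt_nonneg _
  have hb_norm : ∀ k j, ‖b k j‖ = s k j := by
    intro k j
    rw [hbdef]; dsimp only
    split
    · rename_i h
      rw [hsdef]; simp [h]
    · rename_i h
      have hcpos : 0 < ‖c' k j‖ := norm_pos_iff.2 h
      have hspos : 0 < s k j := Real.sqrt_pos.2 hcpos
      rw [norm_mul, norm_inv, Complex.norm_real, Real.norm_of_nonneg hspos.le, ← hs_sq k j,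
        pow_two, ← mul_assoc, inv_mul_cancel₀ hspos.ne', one_mul]
  have hsb : ∀ k j, ((s k j : ℝ) : ℂ) * b k j = c' k j := by
    intro k j
    rw [hbdef]; dsimp only
    split
    · rename_i h
      rw [h, mul_zero]
    · rename_i h
      have hcpos : 0 < ‖c' k j‖ := norm_pos_iff.2 h
      have hspos : 0 < s k j := Real.sqrt_pos.2 hcpos
      have : ((s k j : ℝ) : ℂ) ≠ 0 := Complex.ofReal_ne_zero.2 hspos.ne'
      rw [← mul_assoc, mul_inv_cancel₀ this, one_mul]
  have hssum : ∀ k, (∑ j : Fin M, s k j ^ 2) ≤ 1 := by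
    intro k
    calc ∑ j : Fin M, s k j ^ 2 = ∑ j : Fin M, ‖c' k j‖ := by
          exact Finset.sum_congr rfl fun j _ => hs_sq k j
      _ ≤ 1 := hc' k
  -- the big matrices
  set e : Fin n × Fin M ≃ Fin (n * M) := finProdFinEquiv with hedef
  set κ : Fin (n * M) → Fin n := fun i => (e.symm i).1 with hκdef
  set ι : Fin (n * M) → Fin M := fun i => (e.symm i).2 with hιdef
  have hκe : ∀ p : Fin n × Fin M, κ (e p) = p.1 := fun p => by rw [hκdef]; simp
  have hιe : ∀ p : Fin n × Fin M, ι (e p) = p.2 := fun p => by rw [hιdef]; simp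
  set U : Fin (n * M) → (X →L[ℂ] X) := fun i => S' (κ i) (ι i) with hUdef
  have hU : ∀ i, U i ∈ Γ := fun i => hS' _ _
  set B : Matrix (Fin (n * M)) (Fin n) ℂ :=
    fun i k' => if k' = κ i then b (κ i) (ι i) else 0 with hBdef
  set A : Matrix (Fin n) (Fin (n * M)) ℂ :=
    fun k i => if κ i = k then ((s (κ i) (ι i) : ℝ) : ℂ) else 0 with hAdef
  set y : Fin (n * M) → X := fun i => ∑ k', B i k' • x k' with hydef
  have hy : ∀ i, y i = b (κ i) (ι i) • x (κ i) := by
    intro i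
    rw [hydef]
    dsimp only
    rw [Finset.sum_eq_single (κ i)]
    · rw [hBdef]; simp
    · intro k' _ hk'
      rw [hBdef]; dsimp only; rw [if_neg hk', zero_smul]
    · intro h; exact absurd (Finset.mem_univ _) h
  set z : Fin (n * M) → X := fun i => U i (y i) with hzdef
  -- the reconstruction identity
  have hAz : ∀ k, (∑ i, A k i • z i) = T k (x k) := by
    intro k
    have step1 : (∑ i, A k i • z i) = ∑ p : Fin n × Fin M, A k (e p) • z (e p) :=
      (Equiv.sum_comp e (fun i => A k i • z i)).symm
    rw [step1, Fintype.sum_prod_type]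
    have step2 : ∀ (k' : Fin n) (j : Fin M),
        A k (e (k', j)) • z (e (k', j))
          = if k' = k then (c' k' j • S' k' j) (x k') else 0 := by
      intro k' j
      rw [hzdef, hUdef, hAdef]
      dsimp only
      rw [hy (e (k', j)), hκe (k', j), hιe (k', j)]
      by_cases h : k' = k
      · rw [if_pos h, if_pos h, map_smul, smul_smul, hsb]
        rfl
      · rw [if_neg h, if_neg h, zero_smul]
    simp_rw [step2]
    rw [Finset.sum_comm]
    have step3 : ∀ j : Fin M, (∑ k' : Fin n, if k' = k then (c' k' j • S' k' j) (x k') else 0)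
        = (c' k j • S' k j) (x k) := by
      intro j
      rw [Finset.sum_ite_eq' Finset.univ k (fun k' => (c' k' j • S' k' j) (x k'))]
      simp
    simp_rw [step3]
    rw [hT2 k]
    simp [ContinuousLinearMap.sum_apply]
  -- norm bound for A
  have hA : matrixOpNorm A ≤ 1 := by
    refine matrixOpNorm_le' A 1 zero_le_one fun v => ?_
    have row : ∀ k, (∑ i, A k i * v i) = ∑ j : Fin M, ((s k j : ℝ) : ℂ) * v (e (k, j)) := by
      intro k
      rw [← Equiv.sum_comp e (fun i => A k i * v i), Fintype.sum_prod_type, Finset.sum_comm]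
      refine Finset.sum_congr rfl fun j _ => ?_
      rw [Finset.sum_eq_single k]
      · rw [hAdef]; dsimp only; rw [hκe (k, j), hιe (k, j), if_pos rfl]
      · intro k' _ hk'
        rw [hAdef]; dsimp only; rw [hκe (k', j), hιe (k', j), if_neg hk', zero_mul]
      · intro h; exact absurd (Finset.mem_univ _) h
    simp_rw [row]
    calc ∑ k, ‖∑ j : Fin M, ((s k j : ℝ) : ℂ) * v (e (k, j))‖ ^ 2
        ≤ ∑ k, (∑ j : Fin M, s k j * ‖v (e (k, j))‖) ^ 2 := by
          refine Finset.sum_le_sum fun k _ => ?_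
          have h1 : ‖∑ j : Fin M, ((s k j : ℝ) : ℂ) * v (e (k, j))‖
              ≤ ∑ j : Fin M, s k j * ‖v (e (k, j))‖ := by
            refine (norm_sum_le _ _).trans (le_of_eq (Finset.sum_congr rfl fun j _ => ?_))
            rw [norm_mul, Complex.norm_real, Real.norm_of_nonneg (hs_nonneg k j)]
          exact pow_le_pow_left₀ (norm_nonneg _) h1 2
      _ ≤ ∑ k, (∑ j : Fin M, s k j ^ 2) * (∑ j : Fin M, ‖v (e (k, j))‖ ^ 2) := by
          refine Finset.sum_le_sum fun k _ => ?_
          exact Finset.sum_mul_sq_le_sq_mul_sq Finset.univ (s k) (fun j => ‖v (e (k, j))‖)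
      _ ≤ ∑ k, 1 * (∑ j : Fin M, ‖v (e (k, j))‖ ^ 2) := by
          refine Finset.sum_le_sum fun k _ => ?_
          refine mul_le_mul_of_nonneg_right (hssum k) ?_
          exact Finset.sum_nonneg fun j _ => sq_nonneg _
      _ = ∑ p : Fin n × Fin M, ‖v (e p)‖ ^ 2 := by
          rw [Fintype.sum_prod_type]; simp
      _ = ∑ i, ‖v i‖ ^ 2 := Equiv.sum_comp e (fun i => ‖v i‖ ^ 2)
      _ = 1 ^ 2 * ∑ i, ‖v i‖ ^ 2 := by ring
  -- norm bound for B
  have hB : matrixOpNorm B ≤ 1 := by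
    refine matrixOpNorm_le' B 1 zero_le_one fun v => ?_
    have row : ∀ i, (∑ k', B i k' * v k') = b (κ i) (ι i) * v (κ i) := by
      intro i
      rw [Finset.sum_eq_single (κ i)]
      · rw [hBdef]; simp
      · intro k' _ hk'
        rw [hBdef]; dsimp only; rw [if_neg hk', zero_mul]
      · intro h; exact absurd (Finset.mem_univ _) h
    simp_rw [row]
    calc ∑ i, ‖b (κ i) (ι i) * v (κ i)‖ ^ 2
        = ∑ p : Fin n × Fin M, ‖b (κ (e p)) (ι (e p)) * v (κ (e p))‖ ^ 2 :=
          (Equiv.sum_comp e _).symm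
      _ = ∑ p : Fin n × Fin M, s p.1 p.2 ^ 2 * ‖v p.1‖ ^ 2 := by
          refine Finset.sum_congr rfl fun p _ => ?_
          rw [hκe p, hιe p, norm_mul, mul_pow, hb_norm]
      _ = ∑ k, (∑ j : Fin M, s k j ^ 2) * ‖v k‖ ^ 2 := by
          rw [Fintype.sum_prod_type]
          exact Finset.sum_congr rfl fun k _ => by rw [Finset.sum_mul]
      _ ≤ ∑ k, 1 * ‖v k‖ ^ 2 := by
          refine Finset.sum_le_sum fun k _ => ?_
          exact mul_le_mul_of_nonneg_right (hssum k) (sq_nonneg _)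
      _ = 1 ^ 2 * ∑ k, ‖v k‖ ^ 2 := by simp
  -- put everything together
  have hbound0 : 0 ≤ alphaBound α Γ := alphaBound_nonneg α Γ hΓ
  have hNy : α.N y ≤ 1 := by
    calc α.N y ≤ matrixOpNorm B * α.N x := α.matrix_le B x
      _ ≤ 1 * 1 := mul_le_mul hB hx (α.nonneg x) zero_le_one
      _ = 1 := one_mul 1
  calc α.N (fun k => T k (x k)) = α.N (fun k => ∑ i, A k i • z i) := by
        refine congrArg α.N (funext fun k => ?_)
        exact (hAz k).symm
    _ ≤ matrixOpNorm A * α.N z := α.matrix_le A z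
    _ ≤ 1 * α.N z := mul_le_mul_of_nonneg_right hA (α.nonneg z)
    _ = α.N z := one_mul _
    _ ≤ alphaBound α Γ * α.N y := diag_apply_le α Γ hΓ U hU y
    _ ≤ alphaBound α Γ * 1 := mul_le_mul_of_nonneg_left hNy hbound0
    _ = alphaBound α Γ := mul_one _

/-- If `Γ` is α-bounded then its absolutely convex hull is α-bounded with the same
α-bound: `‖absconv Γ‖_α = ‖Γ‖_α`. -/
theorem absConvexOpHull_alphaBound (X : Type*) [NormedAddCommGroup X] [NormedSpace ℂ X]
    (α : EuclideanStructure X) (Γ : Set (X →L[ℂ] X)) (hΓ : IsAlphaBounded α Γ) :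
    IsAlphaBounded α (absConvexOpHull Γ) ∧ alphaBound α (absConvexOpHull Γ) = alphaBound α Γ := by
  have hsubset : alphaBoundSet α Γ ⊆ alphaBoundSet α (absConvexOpHull Γ) := by
    rintro r ⟨n, T, x, hT, hx, rfl⟩
    exact ⟨n, T, x, fun k => ⟨1, fun _ => 1, fun _ => T k, fun j => hT k, by simp, by simp⟩,
      hx, rfl⟩
  have hbdd : IsAlphaBounded α (absConvexOpHull Γ) :=
    ⟨alphaBound α Γ, fun r hr => hull_bound_le α Γ hΓ r hr⟩
  refine ⟨hbdd, le_antisymm ?_ ?_⟩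
  · exact csSup_le ⟨0, zero_mem_alphaBoundSet α _⟩ (hull_bound_le α Γ hΓ)
  · exact csSup_le_csSup hbdd ⟨0, zero_mem_alphaBoundSet α Γ⟩ hsubset
end
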